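/- Suppose the DMC admits inputs x₀, x₁ ∈ 𝒳 and an output y* ∈ 𝒴 with γ_{x₀} := Γ_{Y|X}(y*|x₀) > 0 and Γ_{Y|X}(y*|x₁) = 0. Fix μ > 0 and k ≥ 1 and consider the scheme where the sensor sends X^k = x₀^k if U^n ∈ 𝒯_μ^{(n)}(P_U) and X^k = x₁^k otherwise, and the decision center outputs Ĥ = 0 if and only if at least one channel output equals y* and V^n ∈ 𝒯_μ^{(n)}(P_V). Then its error probabilities satisfy: (i) 1 − α_n = Pr[U^n ∈ 𝒯_μ^{(n)}(P_U) and V^n ∈ 𝒯_μ^{(n)}(P_V) | H=0] · (1 − (1 − γ_{x₀})^k); and (ii) β_n ≤ (n+1)^{|𝒰||𝒱|} · 2^{−n · min D(π_{UV}‖Q_{UV})}, the minimum being over all pmfs π_{UV} on 𝒰×𝒱 with |π_U(u) − P_U(u)| ≤ μ for all u and |π_V(v) − P_V(v)| ≤ μ for all v. -/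

import Mathlib

open scoped Classical

/-- Base-2 Kullback–Leibler divergence between two pmfs on a finite alphabet. -/
noncomputable def klDiv2 {A : Type} [Fintype A] (p q : A → ℝ) : ℝ :=
  ∑ a, p a * Real.logb 2 (p a / q a)

/-- `p` is a probability mass function on the finite alphabet `A`. -/
def IsPMF {A : Type} [Fintype A] (p : A → ℝ) : Prop :=
  (∀ a, 0 ≤ p a) ∧ ∑ a, p a = 1

/-- `𝒰`-marginal of a joint pmf on `U × V`. -/
noncomputable def margU {U V : Type} [Fintype U] [Fintype V] (p : U × V → ℝ) (u : U) : ℝ :=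
  ∑ v, p (u, v)

/-- `𝒱`-marginal of a joint pmf on `U × V`. -/
noncomputable def margV {U V : Type} [Fintype U] [Fintype V] (p : U × V → ℝ) (v : V) : ℝ :=
  ∑ u, p (u, v)

/-- Empirical frequency of the symbol `x` in the sequence `a : Fin n → A`. -/
noncomputable def empFreq {A : Type} [DecidableEq A] {n : ℕ} (a : Fin n → A) (x : A) : ℝ :=
  ((Finset.univ.filter (fun i : Fin n => a i = x)).card : ℝ) / n

/-- Strong `μ`-typicality of a sequence with respect to a pmf `p`. -/
def Typical {A : Type} [Fintype A] [DecidableEq A] (μ : ℝ) {n : ℕ}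
    (p : A → ℝ) (a : Fin n → A) : Prop :=
  ∀ x : A, (p x = 0 → empFreq a x = 0) ∧ (p x ≠ 0 → |empFreq a x - p x| ≤ μ)

/-- Probability, under source law `R` (i.i.d. over `n` samples) and DMC `Γ`
(memoryless over `k` uses, input `f u`), that the decision `g v y` equals `b`.
Here `b = true` encodes `Ĥ = 1` and `b = false` encodes `Ĥ = 0`. -/
noncomputable def decProb {U V X Y : Type} [Fintype U] [Fintype V] [Fintype X] [Fintype Y]
    (R : U × V → ℝ) (Γ : X → Y → ℝ) {n k : ℕ}
    (f : (Fin n → U) → Fin k → X) (g : (Fin n → V) → (Fin k → Y) → Bool) (b : Bool) : ℝ :=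
  ∑ u : Fin n → U, ∑ v : Fin n → V, ∑ y : Fin k → Y,
    (∏ i, R (u i, v i)) * (∏ j, Γ (f u j) (y j)) * (if g v y = b then 1 else 0)

/-!
Under `H = 0` the sensor's codeword and the center's test interact only through the event that
some channel output equals `y*`: this has probability `1 - (1 - γ_{x₀})^k` when `x₀^k` is sent
and probability `0` when `x₁^k` is sent, since `Γ(y*|x₁) = 0`. So the center accepts exactly when
both sequences are typical and `y*` is seen, which gives (i) by passing to the complement.

For (ii), acceptance under `H = 1` still requires the pair `(U^n, V^n)` to be marginally typical,
and we bound that event by the method of types. If `w` has type `π`, then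
`Q^n(w) = 2^{-n D(π‖Q)} π^n(w)`, so the type class of `π` has `Q^n`-probability at most
`2^{-n D(π‖Q)}`. The type of a marginally typical pair has marginals within `μ` of `P_U` and
`P_V`, and there are at most `(n+1)^{|𝒰||𝒱|}` types.
-/

open Finset InformationTheory

theorem sum_sum_zip {U V : Type} [Fintype U] [Fintype V] {n : ℕ} (F : (Fin n → U × V) → ℝ) :
    ∑ u : Fin n → U, ∑ v : Fin n → V, F (fun i => (u i, v i)) = ∑ w, F w := by
  rw [← Fintype.sum_prod_type']
  exact Fintype.sum_equiv (Equiv.arrowProdEquivProdArrow _ _ _).symm _ _ fun _ => rfl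

theorem IsPMF.le_one {A : Type} [Fintype A] {p : A → ℝ} (hp : IsPMF p) (a : A) : p a ≤ 1 :=
  hp.2 ▸ single_le_sum (fun b _ => hp.1 b) (mem_univ a)

theorem IsPMF.sum_prod_eq_one {A : Type} [Fintype A] {p : A → ℝ} (hp : IsPMF p) (n : ℕ) :
    ∑ w : Fin n → A, ∏ i, p (w i) = 1 := by
  rw [← Fintype.sum_pow, hp.2, one_pow]

theorem IsPMF.sum_sum_prod_eq_one {U V : Type} [Fintype U] [Fintype V] {R : U × V → ℝ}
    (hR : IsPMF R) (n : ℕ) : ∑ u : Fin n → U, ∑ v : Fin n → V, ∏ i, R (u i, v i) = 1 :=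
  (sum_sum_zip fun w => ∏ i, R (w i)).trans (hR.sum_prod_eq_one n)

theorem IsPMF.klDiv2_nonneg {A : Type} [Fintype A] {p q : A → ℝ} (hp : IsPMF p) (hq : IsPMF q)
    (hq_pos : ∀ a, 0 < q a) : 0 ≤ klDiv2 p q := by
  have hterm : ∀ a, p a * Real.log (p a / q a) = q a * klFun (p a / q a) + p a - q a := by
    intro a
    have := (hq_pos a).ne'
    rw [klFun_apply]
    field_simp
    ring
  have hsum : ∑ a, p a * Real.log (p a / q a) = ∑ a, q a * klFun (p a / q a) := by
    simp only [hterm, sum_sub_distrib, sum_add_distrib, hp.2, hq.2, add_sub_cancel_right]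
  have hnonneg : 0 ≤ ∑ a, p a * Real.log (p a / q a) := hsum ▸ sum_nonneg fun a _ =>
    mul_nonneg (hq_pos a).le (klFun_nonneg (div_nonneg (hp.1 a) (hq_pos a).le))
  simp only [klDiv2, Real.logb, ← mul_div_assoc, ← sum_div]
  exact div_nonneg hnonneg (Real.log_nonneg one_le_two)

theorem prod_update_zero_comp {Y : Type} {k : ℕ} (γ : Y → ℝ) (b : Y) (y : Fin k → Y) :
    ∏ j, Function.update γ b 0 (y j) = if ∃ j, y j = b then 0 else ∏ j, γ (y j) := by
  split_ifs with h
  · obtain ⟨j, hj⟩ := h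
    exact prod_eq_zero (mem_univ j) (by simp [hj])
  · push Not at h
    exact prod_congr rfl fun j _ => Function.update_of_ne (h j) _ _

theorem sum_prod_mul_ite_exists_eq {Y : Type} [Fintype Y] (γ : Y → ℝ) (b : Y) (k : ℕ) :
    ∑ y : Fin k → Y, (∏ j, γ (y j)) * (if ∃ j, y j = b then 1 else 0)
      = (∑ a, γ a) ^ k - (∑ a, γ a - γ b) ^ k := by
  have hmiss : ∀ y : Fin k → Y, (∏ j, γ (y j)) * (if ∃ j, y j = b then 1 else 0)
      = ∏ j, γ (y j) - ∏ j, Function.update γ b 0 (y j) := by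
    intro y
    rw [prod_update_zero_comp]
    split_ifs <;> ring
  have hupdate : ∑ a, Function.update γ b 0 a = ∑ a, γ a - γ b := by
    rw [sum_update_of_mem (mem_univ b), sdiff_singleton_eq_erase,
      ← add_sum_erase univ γ (mem_univ b)]
    ring
  simp only [hmiss, sum_sub_distrib, ← Fintype.sum_pow, hupdate]

theorem decProb_true_add_false {U V X Y : Type} [Fintype U] [Fintype V] [Fintype X] [Fintype Y]
    {R : U × V → ℝ} (hR : IsPMF R) {Γ : X → Y → ℝ} (hΓ : ∀ x, IsPMF (Γ x)) {n k : ℕ}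
    (f : (Fin n → U) → Fin k → X) (g : (Fin n → V) → (Fin k → Y) → Bool) :
    decProb R Γ f g true + decProb R Γ f g false = 1 := by
  have hchannel : ∀ u, ∑ y : Fin k → Y, ∏ j, Γ (f u j) (y j) = 1 := fun u => by
    simp only [← Fintype.prod_sum, (hΓ _).2, prod_const_one]
  calc decProb R Γ f g true + decProb R Γ f g false
      = ∑ u : Fin n → U, ∑ v : Fin n → V, ∑ y : Fin k → Y,
          (∏ i, R (u i, v i)) * ∏ j, Γ (f u j) (y j) := by
        simp only [decProb, ← sum_add_distrib, ← mul_add]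
        refine sum_congr rfl fun u _ => sum_congr rfl fun v _ => sum_congr rfl fun y _ => ?_
        cases g v y <;> simp
    _ = 1 := by simp only [← mul_sum, hchannel, mul_one, hR.sum_sum_prod_eq_one n]

section Types

variable {A : Type} [DecidableEq A] {n : ℕ}

theorem empFreq_nonneg (w : Fin n → A) (a : A) : 0 ≤ empFreq w a := by
  unfold empFreq
  positivity

theorem empFreq_pos (w : Fin n → A) (i : Fin n) : 0 < empFreq w (w i) := by
  unfold empFreq
  have : 0 < #{j | w j = w i} := card_pos.2 ⟨i, by simp⟩
  have : 0 < n := i.pos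
  positivity

variable [Fintype A]

theorem sum_comp_eq_mul_sum_empFreq (w : Fin n → A) (F : A → ℝ) :
    ∑ i, F (w i) = n * ∑ a, empFreq w a * F a := by
  rcases n.eq_zero_or_pos with rfl | hn
  · simp
  rw [← sum_fiberwise univ w (fun i => F (w i)), mul_sum]
  refine sum_congr rfl fun a _ => ?_
  rw [sum_congr rfl fun i hi => by rw [(mem_filter.1 hi).2], sum_const, nsmul_eq_mul, empFreq]
  field_simp

theorem isPMF_empFreq (hn : 0 < n) (w : Fin n → A) : IsPMF (empFreq w) := by
  refine ⟨empFreq_nonneg w, ?_⟩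
  have := sum_comp_eq_mul_sum_empFreq w (fun _ => 1)
  simp only [sum_const, card_univ, Fintype.card_fin, nsmul_eq_mul, mul_one] at this
  exact (mul_eq_left₀ (by positivity)).1 this.symm

theorem prod_eq_rpow_mul_prod_empFreq {Q : A → ℝ} (hQ : ∀ a, 0 < Q a) (w : Fin n → A) :
    ∏ i, Q (w i) = 2 ^ (-(n : ℝ) * klDiv2 (empFreq w) Q) * ∏ i, empFreq w (w i) := by
  have hexp : ∑ i, Real.logb 2 (Q (w i) / empFreq w (w i)) = -(n : ℝ) * klDiv2 (empFreq w) Q := by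
    rw [sum_comp_eq_mul_sum_empFreq w fun a => Real.logb 2 (Q a / empFreq w a), klDiv2,
      neg_mul, ← mul_neg, ← sum_neg_distrib]
    simp only [← inv_div (empFreq w _), Real.logb_inv, mul_neg]
  have hratio : ∏ i, Q (w i) / empFreq w (w i) = 2 ^ (-(n : ℝ) * klDiv2 (empFreq w) Q) := by
    rw [← hexp, Real.rpow_sum_of_pos two_pos]
    exact prod_congr rfl fun i _ =>
      (Real.rpow_logb two_pos (by norm_num) (div_pos (hQ _) (empFreq_pos w i))).symm
  rw [← hratio, prod_div_distrib, div_mul_cancel₀]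
  exact prod_ne_zero_iff.2 fun i _ => (empFreq_pos w i).ne'

theorem sum_prod_filter_empFreq_eq_le {Q : A → ℝ} (hQ : ∀ a, 0 < Q a) (w : Fin n → A) :
    ∑ w' : Fin n → A with empFreq w' = empFreq w, ∏ i, Q (w' i)
      ≤ 2 ^ (-(n : ℝ) * klDiv2 (empFreq w) Q) := by
  set c : ℝ := 2 ^ (-(n : ℝ) * klDiv2 (empFreq w) Q)
  have hpow : (∑ a, empFreq w a) ^ n = 1 := by
    rcases n.eq_zero_or_pos with rfl | hn
    · exact pow_zero _
    · rw [(isPMF_empFreq hn w).2, one_pow]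
  calc ∑ w' : Fin n → A with empFreq w' = empFreq w, ∏ i, Q (w' i)
      = ∑ w' : Fin n → A with empFreq w' = empFreq w, c * ∏ i, empFreq w (w' i) :=
        sum_congr rfl fun w' hw' => by
          rw [prod_eq_rpow_mul_prod_empFreq hQ w', (mem_filter.1 hw').2]
    _ ≤ ∑ w' : Fin n → A, c * ∏ i, empFreq w (w' i) :=
        sum_le_sum_of_subset_of_nonneg (filter_subset _ _) fun _ _ _ =>
          mul_nonneg (Real.rpow_nonneg zero_le_two _) (prod_nonneg fun _ _ => empFreq_nonneg _ _)
    _ = c := by rw [← mul_sum, ← Fintype.sum_pow, hpow, mul_one]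

theorem card_image_empFreq_le (B : Finset (Fin n → A)) :
    #(B.image empFreq) ≤ (n + 1) ^ Fintype.card A := by
  calc #(B.image empFreq)
      ≤ #((univ : Finset (A → Fin (n + 1))).image fun c a => ((c a : ℕ) : ℝ) / n) := by
        refine card_le_card fun π hπ => ?_
        obtain ⟨w, -, rfl⟩ := mem_image.1 hπ
        refine mem_image.2 ⟨fun a => ⟨#{i | w i = a}, Nat.lt_succ_of_le ?_⟩, mem_univ _, rfl⟩
        exact (card_filter_le _ _).trans (by simp)
    _ ≤ (n + 1) ^ Fintype.card A := card_image_le.trans (by simp)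

theorem sum_prod_le_of_le_klDiv2 {Q : A → ℝ} (hQ : ∀ a, 0 < Q a) (B : Finset (Fin n → A))
    (d : ℝ) (hB : ∀ w ∈ B, d ≤ klDiv2 (empFreq w) Q) :
    ∑ w ∈ B, ∏ i, Q (w i) ≤ ((n : ℝ) + 1) ^ Fintype.card A * 2 ^ (-(n : ℝ) * d) := by
  rw [← sum_fiberwise_of_maps_to fun w hw => mem_image_of_mem empFreq hw]
  calc ∑ π ∈ B.image empFreq, ∑ w ∈ B with empFreq w = π, ∏ i, Q (w i)
      ≤ ∑ π ∈ B.image empFreq, (2 : ℝ) ^ (-(n : ℝ) * d) := by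
        refine sum_le_sum fun π hπ => ?_
        obtain ⟨w, hw, rfl⟩ := mem_image.1 hπ
        calc ∑ w' ∈ B with empFreq w' = empFreq w, ∏ i, Q (w' i)
            ≤ ∑ w' with empFreq w' = empFreq w, ∏ i, Q (w' i) :=
              sum_le_sum_of_subset_of_nonneg (filter_subset_filter _ (subset_univ B))
                fun _ _ _ => prod_nonneg fun _ _ => (hQ _).le
          _ ≤ 2 ^ (-(n : ℝ) * klDiv2 (empFreq w) Q) := sum_prod_filter_empFreq_eq_le hQ w
          _ ≤ 2 ^ (-(n : ℝ) * d) :=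
              Real.rpow_le_rpow_of_exponent_le one_le_two
                (mul_le_mul_of_nonpos_left (hB w hw) (by simp))
    _ ≤ ((n : ℝ) + 1) ^ Fintype.card A * 2 ^ (-(n : ℝ) * d) := by
        rw [sum_const, nsmul_eq_mul]
        gcongr
        exact_mod_cast card_image_empFreq_le B

end Types

theorem Typical.abs_sub_le {A : Type} [Fintype A] [DecidableEq A] {μ : ℝ} {n : ℕ} {p : A → ℝ}
    {a : Fin n → A} (h : Typical μ p a) (hμ : 0 ≤ μ) (x : A) : |empFreq a x - p x| ≤ μ := by
  by_cases hx : p x = 0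
  · simpa [hx, (h x).1 hx] using hμ
  · exact (h x).2 hx

section Marginals

variable {U V : Type} [Fintype U] [Fintype V] [DecidableEq U] [DecidableEq V] {n : ℕ}

theorem margU_empFreq (w : Fin n → U × V) (x : U) :
    margU (empFreq w) x = empFreq (fun i => (w i).1) x := by
  simp only [margU, empFreq, ← sum_div, ← Nat.cast_sum]
  rw [card_eq_sum_card_fiberwise (f := fun i => (w i).2) (t := univ) fun _ _ => mem_univ _]
  simp [filter_filter, Prod.ext_iff]

theorem margV_empFreq (w : Fin n → U × V) (y : V) :
    margV (empFreq w) y = empFreq (fun i => (w i).2) y := by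
  simp only [margV, empFreq, ← sum_div, ← Nat.cast_sum]
  rw [card_eq_sum_card_fiberwise (f := fun i => (w i).1) (t := univ) fun _ _ => mem_univ _]
  simp [filter_filter, Prod.ext_iff, and_comm]

end Marginals

noncomputable def typicalProb {U V : Type} [Fintype U] [Fintype V] [DecidableEq U] [DecidableEq V]
    (μ : ℝ) (P R : U × V → ℝ) (n : ℕ) : ℝ :=
  ∑ u : Fin n → U, ∑ v : Fin n → V, (∏ i, R (u i, v i)) *
    (if Typical μ (margU P) u ∧ Typical μ (margV P) v then 1 else 0)

theorem typicalProb_nonneg {U V : Type} [Fintype U] [Fintype V] [DecidableEq U] [DecidableEq V]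
    (μ : ℝ) (P : U × V → ℝ) {R : U × V → ℝ} (hR : ∀ p, 0 ≤ R p) (n : ℕ) :
    0 ≤ typicalProb μ P R n :=
  sum_nonneg fun _ _ => sum_nonneg fun _ _ =>
    mul_nonneg (prod_nonneg fun _ _ => hR _) (by split_ifs <;> norm_num)

theorem typicalProb_le_one {U V : Type} [Fintype U] [Fintype V] [DecidableEq U] [DecidableEq V]
    (μ : ℝ) (P : U × V → ℝ) {R : U × V → ℝ} (hR : IsPMF R) (n : ℕ) :
    typicalProb μ P R n ≤ 1 := by
  calc typicalProb μ P R n ≤ ∑ u : Fin n → U, ∑ v : Fin n → V, ∏ i, R (u i, v i) :=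
        sum_le_sum fun _ _ => sum_le_sum fun _ _ => mul_le_of_le_one_right
          (prod_nonneg fun _ _ => hR.1 _) (by split_ifs <;> norm_num)
    _ = 1 := hR.sum_sum_prod_eq_one n

theorem decProb_false_eq_typicalProb_mul {U V X Y : Type} [Fintype U] [Fintype V] [Fintype X]
    [Fintype Y] [DecidableEq U] [DecidableEq V] {P : U × V → ℝ} (R : U × V → ℝ)
    {Γ : X → Y → ℝ} {x₀ x₁ : X} {ystar : Y} (hΓ₀ : IsPMF (Γ x₀)) (hΓ₁ : IsPMF (Γ x₁))
    (h₁ : Γ x₁ ystar = 0) {μ : ℝ} {n k : ℕ} {f : (Fin n → U) → Fin k → X}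
    {g : (Fin n → V) → (Fin k → Y) → Bool}
    (hf : ∀ u : Fin n → U, f u = fun _ => if Typical μ (margU P) u then x₀ else x₁)
    (hg : ∀ (v : Fin n → V) (y : Fin k → Y),
      g v y = false ↔ ((∃ j : Fin k, y j = ystar) ∧ Typical μ (margV P) v)) :
    decProb R Γ f g false = typicalProb μ P R n * (1 - (1 - Γ x₀ ystar) ^ k) := by
  have hhit : ∀ u, ∑ y : Fin k → Y, (∏ j, Γ (f u j) (y j)) * (if ∃ j, y j = ystar then 1 else 0)
      = if Typical μ (margU P) u then 1 - (1 - Γ x₀ ystar) ^ k else 0 := by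
    intro u
    rw [hf u]
    split_ifs
    · rw [sum_prod_mul_ite_exists_eq, hΓ₀.2, one_pow]
    · rw [sum_prod_mul_ite_exists_eq, hΓ₁.2, h₁]
      ring
  simp only [decProb, typicalProb, sum_mul]
  refine sum_congr rfl fun u _ => sum_congr rfl fun v _ => ?_
  calc ∑ y : Fin k → Y, (∏ i, R (u i, v i)) * (∏ j, Γ (f u j) (y j)) *
        (if g v y = false then 1 else 0)
      = (∏ i, R (u i, v i)) * (if Typical μ (margV P) v then 1 else 0) *
          ∑ y : Fin k → Y, (∏ j, Γ (f u j) (y j)) * (if ∃ j, y j = ystar then 1 else 0) := by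
        rw [mul_sum]
        refine sum_congr rfl fun y _ => ?_
        simp only [hg, ite_and]
        split_ifs <;> ring
    _ = _ := by
        rw [hhit, ite_and]
        split_ifs <;> ring

theorem typicalProb_le {U V : Type} [Fintype U] [Fintype V] [DecidableEq U] [DecidableEq V]
    (P : U × V → ℝ) {Q : U × V → ℝ} (hQ : IsPMF Q) (hQpos : ∀ p, 0 < Q p) {μ : ℝ} (hμ : 0 ≤ μ)
    (n : ℕ) :
    typicalProb μ P Q n ≤ ((n : ℝ) + 1) ^ (Fintype.card U * Fintype.card V) *
      (2 : ℝ) ^ (-(n : ℝ) * sInf {d | ∃ π : U × V → ℝ, IsPMF π ∧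
        (∀ u : U, |margU π u - margU P u| ≤ μ) ∧
        (∀ v : V, |margV π v - margV P v| ≤ μ) ∧ d = klDiv2 π Q}) := by
  rcases n.eq_zero_or_pos with rfl | hn
  · simpa using typicalProb_le_one μ P hQ 0
  calc typicalProb μ P Q n
      = ∑ w : Fin n → U × V with
          Typical μ (margU P) (fun i => (w i).1) ∧ Typical μ (margV P) (fun i => (w i).2),
          ∏ i, Q (w i) := by
        rw [sum_filter, ← sum_sum_zip]
        simp only [typicalProb, mul_ite, mul_one, mul_zero]
    _ ≤ _ := by
        rw [← Fintype.card_prod]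
        refine sum_prod_le_of_le_klDiv2 hQpos _ _ fun w hw => csInf_le ⟨0, ?_⟩ ?_
        · rintro _ ⟨π, hπ, -, -, rfl⟩
          exact hπ.klDiv2_nonneg hQ hQpos
        obtain ⟨hu, hv⟩ := (mem_filter.1 hw).2
        refine ⟨empFreq w, isPMF_empFreq hn w, fun x => ?_, fun y => ?_, rfl⟩
        · rw [margU_empFreq]
          exact hu.abs_sub_le hμ x
        · rw [margV_empFreq]
          exact hv.abs_sub_le hμ y

theorem typicality_scheme_error_analysis_general
    {U V X Y : Type} [Fintype U] [Fintype V] [Fintype X] [Fintype Y]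
    [DecidableEq U] [DecidableEq V]
    (P Q : U × V → ℝ) (hP : IsPMF P) (hQ : IsPMF Q) (hQpos : ∀ p : U × V, 0 < Q p)
    (Γ : X → Y → ℝ) (hΓ : ∀ x, IsPMF (Γ x))
    (x₀ x₁ : X) (ystar : Y)
    (h₁ : Γ x₁ ystar = 0)
    (μ : ℝ) (hμ : 0 < μ) (n k : ℕ)
    (f : (Fin n → U) → Fin k → X)
    (g : (Fin n → V) → (Fin k → Y) → Bool)
    (hf : ∀ u : Fin n → U,
      f u = fun _ => if Typical μ (margU P) u then x₀ else x₁)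
    (hg : ∀ (v : Fin n → V) (y : Fin k → Y),
      g v y = false ↔ ((∃ j : Fin k, y j = ystar) ∧ Typical μ (margV P) v)) :
    1 - decProb P Γ f g true
      = (∑ u : Fin n → U, ∑ v : Fin n → V, (∏ i, P (u i, v i)) *
          (if Typical μ (margU P) u ∧ Typical μ (margV P) v then 1 else 0))
        * (1 - (1 - Γ x₀ ystar) ^ k) ∧
    decProb Q Γ f g false
      ≤ ((n : ℝ) + 1) ^ (Fintype.card U * Fintype.card V) *
        (2 : ℝ) ^ (-(n : ℝ) * sInf {d | ∃ π : U × V → ℝ, IsPMF π ∧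
          (∀ u : U, |margU π u - margU P u| ≤ μ) ∧
          (∀ v : V, |margV π v - margV P v| ≤ μ) ∧ d = klDiv2 π Q}) := by
  have hacc : ∀ R, decProb R Γ f g false = typicalProb μ P R n * (1 - (1 - Γ x₀ ystar) ^ k) :=
    fun R => decProb_false_eq_typicalProb_mul R (hΓ x₀) (hΓ x₁) h₁ hf hg
  refine ⟨?_, ?_⟩
  · change 1 - decProb P Γ f g true = typicalProb μ P P n * _
    linarith [decProb_true_add_false hP hΓ f g, hacc P]
  · have hhit_le_one : 1 - (1 - Γ x₀ ystar) ^ k ≤ 1 :=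
      sub_le_self _ (pow_nonneg (sub_nonneg.2 ((hΓ x₀).le_one ystar)) k)
    calc decProb Q Γ f g false ≤ typicalProb μ P Q n := by
          rw [hacc]
          exact mul_le_of_le_one_right (typicalProb_nonneg μ P hQ.1 n) hhit_le_one
      _ ≤ _ := typicalProb_le P hQ hQpos hμ.le n

/-- Analysis of the one-bit typicality scheme over a partially
connected DMC: the sensor sends `x₀^k` if `U^n` is `μ`-typical for `P_U` and
`x₁^k` otherwise, and the center accepts (`Ĥ = 0`) iff some output equals `y*`
and `V^n` is `μ`-typical for `P_V`. Then
(i) `1 − α_n = Pr[U^n, V^n marginally typical | H=0] · (1 − (1 − γ_{x₀})^k)`, and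
(ii) `β_n ≤ (n+1)^{|𝒰||𝒱|} 2^{−n·min D(π_{UV}‖Q_{UV})}` with the minimum over
pmfs whose marginals are within `μ` of `P_U` and `P_V`. -/
theorem typicality_scheme_error_analysis
    {U V X Y : Type} [Fintype U] [Fintype V] [Fintype X] [Fintype Y]
    [DecidableEq U] [DecidableEq V]
    (P Q : U × V → ℝ) (hP : IsPMF P) (hQ : IsPMF Q) (hQpos : ∀ p : U × V, 0 < Q p)
    (Γ : X → Y → ℝ) (hΓ : ∀ x, IsPMF (Γ x))
    (x₀ x₁ : X) (ystar : Y)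
    (h₀ : 0 < Γ x₀ ystar) (h₁ : Γ x₁ ystar = 0)
    (μ : ℝ) (hμ : 0 < μ) (n k : ℕ) (hk : 1 ≤ k)
    (f : (Fin n → U) → Fin k → X)
    (g : (Fin n → V) → (Fin k → Y) → Bool)
    (hf : ∀ u : Fin n → U,
      f u = fun _ => if Typical μ (margU P) u then x₀ else x₁)
    (hg : ∀ (v : Fin n → V) (y : Fin k → Y),
      g v y = false ↔ ((∃ j : Fin k, y j = ystar) ∧ Typical μ (margV P) v)) :
    1 - decProb P Γ f g true
      = (∑ u : Fin n → U, ∑ v : Fin n → V, (∏ i, P (u i, v i)) *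
          (if Typical μ (margU P) u ∧ Typical μ (margV P) v then 1 else 0))
        * (1 - (1 - Γ x₀ ystar) ^ k) ∧
    decProb Q Γ f g false
      ≤ ((n : ℝ) + 1) ^ (Fintype.card U * Fintype.card V) *
        (2 : ℝ) ^ (-(n : ℝ) * sInf {d | ∃ π : U × V → ℝ, IsPMF π ∧
          (∀ u : U, |margU π u - margU P u| ≤ μ) ∧
          (∀ v : V, |margV π v - margV P v| ≤ μ) ∧ d = klDiv2 π Q}) :=
  typicality_scheme_error_analysis_general P Q hP hQ hQpos Γ hΓ x₀ x₁ ystar h₁ μ hμ n k f g hf hg
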